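/- arXiv:2112.02866 — 4 statements merged into one kernel-verified Lean document; each statement's English description precedes it below -/
import Mathlib

section
/- Let K ≥ 1, w ∈ ℝ^K, and η > 0. Then there exists a unique real number λ with λ < min_{i∈[K]} w(i) such that ∑_{i=1}^{K} η²/(w(i) - λ)² = 1. -/
/-!
On `(-∞, min w)` the map `l ↦ ∑ c / (w i - l) ^ 2` (with `c = η ^ 2 > 0`) is continuous and
strictly increasing; it tends to `0` as `l → -∞` and to `+∞` as `l ↑ min w`, because the term of a
minimizing index blows up. The intermediate value theorem gives a solution of `… = 1`, and strict
monotonicity makes it unique.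
-/

open Filter Set Topology

section SumDivSqSub

variable {ι : Type*} (s : Finset ι) (w : ι → ℝ) {c : ℝ}

theorem strictMonoOn_div_sq_sub (hc : 0 < c) (a : ℝ) :
    StrictMonoOn (fun l : ℝ => c / (a - l) ^ 2) (Iio a) := by
  intro x _ y hy hxy
  have hay : 0 < a - y := sub_pos.mpr hy
  exact div_lt_div_of_pos_left hc (by positivity) (by nlinarith)

theorem tendsto_div_sq_sub_nhdsLT (hc : 0 < c) (a : ℝ) :
    Tendsto (fun l : ℝ => c / (a - l) ^ 2) (𝓝[<] a) atTop := by
  have hsq : Tendsto (fun l : ℝ => (a - l) ^ 2) (𝓝[<] a) (𝓝[>] 0) := by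
    refine tendsto_nhdsWithin_iff.mpr ⟨?_, ?_⟩
    · have : Continuous fun l : ℝ => (a - l) ^ 2 := by fun_prop
      simpa using this.continuousWithinAt (s := Iio a) (x := a) |>.tendsto
    · filter_upwards [self_mem_nhdsWithin] with l (hl : l < a)
      exact pow_pos (sub_pos.mpr hl) 2
  exact ((tendsto_inv_nhdsGT_zero.comp hsq).const_mul_atTop hc).congr fun l =>
    (div_eq_mul_inv c _).symm

theorem tendsto_div_sq_sub_atBot (c a : ℝ) :
    Tendsto (fun l : ℝ => c / (a - l) ^ 2) atBot (𝓝 0) := by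
  have hsub : Tendsto (fun l : ℝ => a - l) atBot atTop :=
    tendsto_atTop_add_const_left _ a tendsto_neg_atBot_atTop
  exact tendsto_const_nhds.div_atTop ((tendsto_pow_atTop two_ne_zero).comp hsub)

theorem strictMonoOn_sum_div_sq_sub (hc : 0 < c) (hs : s.Nonempty) {m : ℝ}
    (hm : ∀ i ∈ s, m ≤ w i) :
    StrictMonoOn (fun l : ℝ => ∑ i ∈ s, c / (w i - l) ^ 2) (Iio m) := by
  intro x hx y hy hxy
  refine Finset.sum_lt_sum_of_nonempty hs fun i hi => ?_
  have hsub : Iio m ⊆ Iio (w i) := Iio_subset_Iio (hm i hi)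
  exact strictMonoOn_div_sq_sub hc (w i) (hsub hx) (hsub hy) hxy

theorem continuousOn_sum_div_sq_sub (c : ℝ) {m : ℝ} (hm : ∀ i ∈ s, m ≤ w i) :
    ContinuousOn (fun l : ℝ => ∑ i ∈ s, c / (w i - l) ^ 2) (Iio m) := by
  refine continuousOn_finsetSum s fun i hi => ?_
  refine continuousOn_const.div (by fun_prop) fun l (hl : l < m) => ?_
  exact pow_ne_zero 2 (sub_pos.mpr (hl.trans_le (hm i hi))).ne'

theorem tendsto_sum_div_sq_sub_atBot (c : ℝ) :
    Tendsto (fun l : ℝ => ∑ i ∈ s, c / (w i - l) ^ 2) atBot (𝓝 0) := by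
  simpa using tendsto_finsetSum s fun i _ => tendsto_div_sq_sub_atBot c (w i)

theorem tendsto_sum_div_sq_sub_nhdsLT (hc : 0 < c) {j : ι} (hj : j ∈ s) :
    Tendsto (fun l : ℝ => ∑ i ∈ s, c / (w i - l) ^ 2) (𝓝[<] w j) atTop :=
  tendsto_atTop_mono
    (fun l => Finset.single_le_sum (f := fun i => c / (w i - l) ^ 2)
      (fun i _ => by positivity) hj)
    (tendsto_div_sq_sub_nhdsLT hc (w j))

theorem existsUnique_lt_inf'_sum_div_sq_sub_eq (hc : 0 < c) (hs : s.Nonempty) {b : ℝ}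
    (hb : 0 < b) :
    ∃! l : ℝ, l < s.inf' hs w ∧ ∑ i ∈ s, c / (w i - l) ^ 2 = b := by
  obtain ⟨j, hj, hjm⟩ := Finset.exists_mem_eq_inf' hs w
  have hm : ∀ i ∈ s, s.inf' hs w ≤ w i := fun i hi => Finset.inf'_le w hi
  obtain ⟨l, hl, hlb⟩ := isPreconnected_Iio.intermediate_value_Ioi
    (le_principal_iff.mpr (Iio_mem_atBot _)) (hjm ▸ inf_le_right)
    (continuousOn_sum_div_sq_sub s w c hm) (tendsto_sum_div_sq_sub_atBot s w c)
    (hjm ▸ tendsto_sum_div_sq_sub_nhdsLT s w hc hj) (mem_Ioi.mpr hb)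
  refine ⟨l, ⟨hl, hlb⟩, fun l' hl' => ?_⟩
  exact (strictMonoOn_sum_div_sq_sub s w hc hs hm).injOn hl'.1 hl (hl'.2.trans hlb.symm)

end SumDivSqSub

theorem lagrange_multiplier_exists_unique
    (K : ℕ) (hK : 1 ≤ K) (w : Fin K → ℝ) (η : ℝ) (hη : 0 < η) :
    ∃! l : ℝ,
      l < Finset.univ.inf'
            (Finset.univ_nonempty_iff.mpr (Fin.pos_iff_nonempty.mp hK)) w
      ∧ ∑ i : Fin K, η ^ 2 / (w i - l) ^ 2 = 1 :=
  existsUnique_lt_inf'_sum_div_sq_sub_eq _ w (pow_pos hη 2) _ one_pos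
end

section
/- Let K ≥ 1, w ∈ ℝ^K, η > 0, and let λ < min_i w(i) satisfy ∑_{i=1}^{K} η²/(w(i)-λ)² = 1. Define q(i) := η²/(w(i)-λ)² for each i. Then q lies in the probability simplex Δ_K (i.e., q(i) > 0 for all i and ∑_i q(i) = 1), and q is the unique global minimizer over Δ_K of the function F(p) = ∑_{i=1}^{K} w(i)·p(i) - 2η·∑_{i=1}^{K} √(p(i)). -/
/-!
Write `a i = w i - l > 0`, so that `√(q i) = η / a i`. Completing the square termwise gives
`F p - F q = l * (∑ p - ∑ q) + ∑ a i * (√(p i) - √(q i))²`; the multiplier `l` absorbs the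
constraint `∑ p = 1`, and the remaining sum of squares is positive unless `p = q`.
-/

open Finset

variable {ι : Type*} [Fintype ι]

noncomputable def tsallisObjective (w : ι → ℝ) (η : ℝ) (p : ι → ℝ) : ℝ :=
  ∑ i, w i * p i - 2 * η * ∑ i, √(p i)

theorem tsallisObjective_sub_eq {w p q : ι → ℝ} {η l : ℝ} (hη : 0 ≤ η)
    (hl : ∀ i, l < w i) (hp : ∀ i, 0 ≤ p i) (hq : ∀ i, q i = η ^ 2 / (w i - l) ^ 2) :
    tsallisObjective w η p - tsallisObjective w η q =
      l * (∑ i, p i - ∑ i, q i) + ∑ i, (w i - l) * (√(p i) - √(q i)) ^ 2 := by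
  have hterm : ∀ i, w i * p i - 2 * η * √(p i) - (w i * q i - 2 * η * √(q i)) =
      l * (p i - q i) + (w i - l) * (√(p i) - √(q i)) ^ 2 := by
    intro i
    have ha : 0 < w i - l := sub_pos.2 (hl i)
    have hsqrt_q : √(q i) = η / (w i - l) := by
      rw [hq i, ← div_pow, Real.sqrt_sq (div_nonneg hη ha.le)]
    have hη_eq : η = (w i - l) * √(q i) := by
      rw [hsqrt_q]; field_simp
    have hp_sq := Real.sq_sqrt (hp i)
    have hq_sq := Real.sq_sqrt ((hq i).symm ▸ by positivity : 0 ≤ q i)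
    linear_combination (2 * √(q i) - 2 * √(p i)) * hη_eq - (w i - l) * hp_sq
      + (w i - l) * hq_sq
  have hsum := sum_congr rfl fun i (_ : i ∈ univ) => hterm i
  simp only [sum_add_distrib, sum_sub_distrib, ← mul_sum] at hsum
  rw [tsallisObjective, tsallisObjective]
  linarith

theorem sum_mul_sq_sqrt_sub_pos {a p q : ι → ℝ} (ha : ∀ i, 0 < a i) (hp : ∀ i, 0 ≤ p i)
    (hq : ∀ i, 0 ≤ q i) (hpq : p ≠ q) :
    0 < ∑ i, a i * (√(p i) - √(q i)) ^ 2 := by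
  obtain ⟨i, hi⟩ := Function.ne_iff.mp hpq
  have hsqrt_ne : √(p i) - √(q i) ≠ 0 :=
    sub_ne_zero.2 fun h => hi ((Real.sqrt_inj (hp i) (hq i)).mp h)
  exact sum_pos' (fun j _ => mul_nonneg (ha j).le (sq_nonneg _))
    ⟨i, mem_univ i, mul_pos (ha i) (sq_pos_of_ne_zero hsqrt_ne)⟩

theorem tsallisObjective_lt_of_ne {w p q : ι → ℝ} {η l : ℝ} (hη : 0 ≤ η)
    (hl : ∀ i, l < w i) (hq : ∀ i, q i = η ^ 2 / (w i - l) ^ 2) (hp : ∀ i, 0 ≤ p i)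
    (hsum : ∑ i, p i = ∑ i, q i) (hpq : p ≠ q) :
    tsallisObjective w η q < tsallisObjective w η p := by
  have hq_nonneg : ∀ i, 0 ≤ q i := fun i => (hq i).symm ▸ by positivity
  have hdiff := tsallisObjective_sub_eq hη hl hp hq
  have hpos := sum_mul_sq_sqrt_sub_pos (fun i => sub_pos.2 (hl i)) hp hq_nonneg hpq
  rw [hsum, sub_self, mul_zero, zero_add] at hdiff
  linarith

theorem tsallis_ftrl_minimizer
    (K : ℕ) (hK : 1 ≤ K) (w : Fin K → ℝ) (η : ℝ) (hη : 0 < η)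
    (l : ℝ)
    (hl : l < Finset.univ.inf'
            (Finset.univ_nonempty_iff.mpr (Fin.pos_iff_nonempty.mp hK)) w)
    (hnorm : ∑ i : Fin K, η ^ 2 / (w i - l) ^ 2 = 1)
    (q : Fin K → ℝ) (hq : ∀ i, q i = η ^ 2 / (w i - l) ^ 2) :
    (∀ i, 0 < q i) ∧ (∑ i, q i = 1) ∧
      (∀ p : Fin K → ℝ, (∀ i, 0 ≤ p i) → (∑ i, p i = 1) → p ≠ q →
        (∑ i, w i * q i) - 2 * η * ∑ i, Real.sqrt (q i)
          < (∑ i, w i * p i) - 2 * η * ∑ i, Real.sqrt (p i)) := by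
  have hlw : ∀ i, l < w i := fun i => (lt_inf'_iff _).mp hl i (mem_univ i)
  have hq_pos : ∀ i, 0 < q i := fun i => by
    rw [hq i]; exact div_pos (pow_pos hη 2) (pow_pos (sub_pos.2 (hlw i)) 2)
  have hq_sum : ∑ i, q i = 1 := by simp only [hq, hnorm]
  refine ⟨hq_pos, hq_sum, fun p hp hp_sum hpq => ?_⟩
  exact tsallisObjective_lt_of_ne hη.le hlw hq hp (hp_sum.trans hq_sum.symm) hpq
end

section
/- Let K ≥ 1, η > 0, and for each u ∈ ℝ^K let λ(u) denote the unique real number with λ(u) < min_i u(i) and ∑_{i=1}^{K} η²/(u(i)-λ(u))² = 1. Then λ is monotone: for every u ∈ ℝ^K, every j ∈ [K], and every δ > 0, λ(u + δ·e_j) ≥ λ(u), where e_j is the j-th standard basis vector. -/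
/-! If `λ` decreased while one coordinate of `u` increased, every gap `u i - λ` would strictly
grow, so every term `η² / (u i - λ)²` would strictly shrink and the normalised sum could not
stay equal to `1`. -/

open Finset

lemma div_sq_sub_lt_div_sq_sub {c x y a b : ℝ} (hc : 0 < c) (hxy : x ≤ y) (hba : b < a)
    (hax : a < x) : c / (y - b) ^ 2 < c / (x - a) ^ 2 := by
  have hgap : x - a < y - b := by linarith
  exact div_lt_div_of_pos_left hc (by nlinarith) (pow_lt_pow_left₀ hgap (by linarith) two_ne_zero)

lemma sum_div_sq_sub_lt_sum_div_sq_sub {ι : Type*} {s : Finset ι} (hs : s.Nonempty) {c a b : ℝ}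
    {u v : ι → ℝ} (hc : 0 < c) (huv : u ≤ v) (hba : b < a) (hau : ∀ i ∈ s, a < u i) :
    ∑ i ∈ s, c / (v i - b) ^ 2 < ∑ i ∈ s, c / (u i - a) ^ 2 :=
  sum_lt_sum_of_nonempty hs fun i hi => div_sq_sub_lt_div_sq_sub hc (huv i) hba (hau i hi)

theorem lagrange_multiplier_monotone
    (K : ℕ) (hK : 1 ≤ K) (η : ℝ) (hη : 0 < η)
    (lam : (Fin K → ℝ) → ℝ)
    (hlam : ∀ u : Fin K → ℝ,
      lam u < Finset.univ.inf'
          (Finset.univ_nonempty_iff.mpr (Fin.pos_iff_nonempty.mp hK)) u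
      ∧ ∑ i : Fin K, η ^ 2 / (u i - lam u) ^ 2 = 1) :
    ∀ (u : Fin K → ℝ) (j : Fin K) (δ : ℝ), 0 < δ →
      lam u ≤ lam (u + Pi.single j δ) := by
  intro u j δ hδ
  by_contra! hdec
  obtain ⟨hu_min, hu_sum⟩ := hlam u
  have hle : u ≤ u + Pi.single j δ := le_add_of_nonneg_right (Pi.single_nonneg.mpr hδ.le)
  have hlt := sum_div_sq_sub_lt_sum_div_sq_sub ⟨j, mem_univ j⟩ (pow_pos hη 2) hle hdec
    fun i _ => hu_min.trans_le (inf'_le u (mem_univ i))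
  rw [hu_sum, (hlam _).2] at hlt
  exact hlt.false
end

section
/- Let K ≥ 1, η > 0, and for u ∈ ℝ^K let λ(u) be the unique real with λ(u) < min_i u(i) and ∑_{i=1}^{K} η²/(u(i)-λ(u))² = 1. Let w ∈ ℝ^K satisfy w(1) ≤ w(2) ≤ ... ≤ w(K). Then for every δ > 0 and j ∈ [K], λ(w + δ·e_j) - λ(w) ≤ δ/j. -/
/-!
Write `F_u(μ) = ∑ᵢ η² / (uᵢ - μ)²`; it is strictly increasing on `μ < min u`, and `λ(u)` is the
point where `F_u = 1`. Put `u = w + δ eⱼ`, `c = δ / (j + 1)` (with `j` counted from `0`) and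
`aᵢ = wᵢ - λ(w)`. Unless `λ(w) + c ≥ min u`, when there is nothing to prove, it suffices to show
`F_u(λ(w) + c) ≥ F_w(λ(w))`, i.e. that moving `aⱼ` up by `j c` and every other `aᵢ` down by `c` does not
decrease `∑ᵢ η² / aᵢ²`. By the tangent-line bound for the convex `x ↦ η²/x²` the sum changes by at least
`2η² c (∑ᵢ aᵢ⁻³ - (j + 1) aⱼ⁻³)`, which is nonnegative since `w` is sorted: `aᵢ⁻³ ≥ aⱼ⁻³` for `i ≤ j`.
-/

open Finset

theorem Fin.succ_nsmul_le_sum_of_antitone {M : Type*} [AddCommMonoid M] [PartialOrder M]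
    [IsOrderedAddMonoid M] {K : ℕ} {g : Fin K → M} (hg : Antitone g) (hg0 : 0 ≤ g) (j : Fin K) :
    ((j : ℕ) + 1) • g j ≤ ∑ i, g i :=
  calc ((j : ℕ) + 1) • g j = ∑ _i ∈ Iic j, g j := by rw [Finset.sum_const, Fin.card_Iic]
    _ ≤ ∑ i ∈ Iic j, g i := sum_le_sum fun i hi => hg (mem_Iic.mp hi)
    _ ≤ ∑ i, g i := sum_le_sum_of_subset_of_nonneg (subset_univ _) fun i _ _ => hg0 i

theorem div_sq_sub_le_div_sq (η : ℝ) {x y : ℝ} (hx : 0 < x) (hy : 0 < y) :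
    η ^ 2 / x ^ 2 - 2 * η ^ 2 * (y - x) / x ^ 3 ≤ η ^ 2 / y ^ 2 := by
  have hfactor : 0 ≤ η ^ 2 * x ^ 2 * ((x - y) ^ 2 * (x + 2 * y)) := by positivity
  rw [div_sub_div _ _ (by positivity) (by positivity), div_le_div_iff₀ (by positivity) (by positivity)]
  linarith

theorem sum_div_sq_le_sum_div_sq_shift {K : ℕ} (η : ℝ) {c : ℝ} (hc : 0 ≤ c) {a : Fin K → ℝ}
    (ha : Monotone a) (ha0 : ∀ i, 0 < a i) (j : Fin K)
    (hb : ∀ i, 0 < a i + (Pi.single j (((j : ℕ) + 1) * c) : Fin K → ℝ) i - c) :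
    ∑ i, η ^ 2 / a i ^ 2 ≤
      ∑ i, η ^ 2 / (a i + (Pi.single j (((j : ℕ) + 1) * c) : Fin K → ℝ) i - c) ^ 2 := by
  set d : Fin K → ℝ := fun i => (Pi.single j (((j : ℕ) + 1) * c) : Fin K → ℝ) i - c
  have hinv : Antitone fun i => (a i ^ 3)⁻¹ := fun i k hik =>
    inv_anti₀ (pow_pos (ha0 i) 3) (pow_le_pow_left₀ (ha0 i).le (ha hik) 3)
  have hdrift : ∑ i, d i * (a i ^ 3)⁻¹ ≤ 0 := by
    have := Fin.succ_nsmul_le_sum_of_antitone hinv (fun i => by have := ha0 i; positivity) j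
    simp only [d, sub_mul, sum_sub_distrib, Pi.single_apply, ite_mul, zero_mul, sum_ite_eq',
      mem_univ, if_true, ← mul_sum, nsmul_eq_mul, Nat.cast_add, Nat.cast_one] at this ⊢
    nlinarith
  calc ∑ i, η ^ 2 / a i ^ 2
      ≤ ∑ i, (η ^ 2 / a i ^ 2 - 2 * η ^ 2 * d i / a i ^ 3) := by
        simp only [sum_sub_distrib, mul_div_assoc, ← mul_sum, div_eq_mul_inv (d _)]
        nlinarith [sq_nonneg η]
    _ ≤ ∑ i, η ^ 2 / (a i + d i) ^ 2 := sum_le_sum fun i _ => by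
        simpa only [add_sub_cancel_left, add_sub_assoc] using div_sq_sub_le_div_sq η (ha0 i) (hb i)
    _ = _ := by simp only [d, add_sub_assoc]

theorem le_of_sum_div_sq_sub_le {ι : Type*} [Fintype ι] [Nonempty ι] {η : ℝ} (hη : η ≠ 0)
    {u : ι → ℝ} {μ ν : ℝ} (hμ : ∀ i, μ < u i)
    (h : ∑ i, η ^ 2 / (u i - μ) ^ 2 ≤ ∑ i, η ^ 2 / (u i - ν) ^ 2) : μ ≤ ν := by
  by_contra! hνμ
  have : ∑ i, η ^ 2 / (u i - ν) ^ 2 < ∑ i, η ^ 2 / (u i - μ) ^ 2 :=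
    sum_lt_sum_of_nonempty univ_nonempty fun i _ => by
      have := hμ i
      gcongr
  linarith

theorem lagrange_multiplier_lipschitz
    (K : ℕ) (hK : 1 ≤ K) (η : ℝ) (hη : 0 < η)
    (lam : (Fin K → ℝ) → ℝ)
    (hlam : ∀ u : Fin K → ℝ,
      lam u < Finset.univ.inf'
          (Finset.univ_nonempty_iff.mpr (Fin.pos_iff_nonempty.mp hK)) u
      ∧ ∑ i : Fin K, η ^ 2 / (u i - lam u) ^ 2 = 1)
    (w : Fin K → ℝ) (hw : ∀ i j : Fin K, i ≤ j → w i ≤ w j) :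
    ∀ (δ : ℝ) (j : Fin K), 0 < δ →
      lam (w + Pi.single j δ) - lam w ≤ δ / ((j : ℕ) + 1) := by
  intro δ j hδ
  have : Nonempty (Fin K) := Fin.pos_iff_nonempty.mp hK
  set u : Fin K → ℝ := w + Pi.single j δ
  set c : ℝ := δ / ((j : ℕ) + 1)
  obtain ⟨hw_lt, hw_one⟩ := hlam w
  obtain ⟨hu_lt, hu_one⟩ := hlam u
  rw [lt_inf'_iff] at hw_lt hu_lt
  suffices lam u ≤ lam w + c by linarith
  by_cases hgap : ∀ i, lam w + c < u i
  · refine le_of_sum_div_sq_sub_le hη.ne' (fun i => hu_lt i (mem_univ i))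
      ((hu_one.trans hw_one.symm).le.trans ?_)
    have hshift : ∀ i, u i - (lam w + c) =
        (w i - lam w) + (Pi.single j (((j : ℕ) + 1) * c) : Fin K → ℝ) i - c := by
      intro i
      rw [mul_div_cancel₀ δ (by positivity)]
      simp only [u, Pi.add_apply]
      ring
    simp only [hshift]
    exact sum_div_sq_le_sum_div_sq_shift η (by positivity)
      (fun i k hik => sub_le_sub_right (hw i k hik) _) (fun i => sub_pos.mpr (hw_lt i (mem_univ i)))
      j fun i => by linarith [hshift i, hgap i]
  · push Not at hgap
    obtain ⟨i, hi⟩ := hgap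
    linarith [hu_lt i (mem_univ i)]
end
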